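/- Fix a constant L > 0, a finite index set V, a nonempty subset N ⊆ V with |N| = m, admissible functions h_i : ℝ → ℝ for i ∈ V, and a nonempty closed convex set 𝒳 ⊆ ℝ. Let β be a real number with β ≤ 1/m and let γ be a natural number with γ ≤ m. Then the set Ỹ(β,γ) is convex and closed. -/

import Mathlib

/-- A function `h : ℝ → ℝ` is admissible with constant `L > 0` if it is convex,
continuously differentiable, its derivative is bounded by `L` and `L`-Lipschitz,
and its set of unconstrained global minimizers is nonempty and compact. -/
def Admissible (L : ℝ) (h : ℝ → ℝ) : Prop :=
  ConvexOn ℝ Set.univ h ∧ ContDiff ℝ 1 h ∧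
    (∀ x : ℝ, |deriv h x| ≤ L) ∧ LipschitzWith L.toNNReal (deriv h) ∧
    {x : ℝ | ∀ y : ℝ, h x ≤ h y}.Nonempty ∧ IsCompact {x : ℝ | ∀ y : ℝ, h x ≤ h y}

/-- A weight vector `α` over the index set `V` is `(β,γ)`-valid over `(V,N)` if
all weights are nonnegative, they sum (over `V`) to `1`, and at least `γ`
indices in `N` have weight at least `β`. -/
def ValidWeightVN {ι : Type*} (V N : Finset ι) (β : ℝ) (γ : ℕ) (α : ι → ℝ) : Prop :=
  (∀ i ∈ V, 0 ≤ α i) ∧ (∑ i ∈ V, α i = 1) ∧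
    ∃ S ⊆ N, γ ≤ S.card ∧ ∀ i ∈ S, β ≤ α i

/-- `Ỹ(β,γ)`: the union over all weight vectors `α` that are `(β,γ)`-valid over
`(V,N)` of the set of minimizers over the constraint set `𝒳` of
`x ↦ ∑_{i∈V} α_i h_i(x)`. -/
def YTildeSet {ι : Type*} (V N : Finset ι) (h : ι → ℝ → ℝ) (X : Set ℝ)
    (β : ℝ) (γ : ℕ) : Set ℝ :=
  {x : ℝ | x ∈ X ∧ ∃ α : ι → ℝ, ValidWeightVN V N β γ α ∧
    ∀ y ∈ X, ∑ i ∈ V, α i * h i x ≤ ∑ i ∈ V, α i * h i y}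

/-!
For nonnegative weights `α`, the derivative `∑ αᵢ hᵢ'` of the objective is monotone in `x` and
linear in `α`. If `a ≤ z ≤ b` minimize the objectives of valid weights `α₁` and `α₂` over `X`,
then the derivative at `z` is `≥ 0` for `α₁` and `≤ 0` for `α₂`. Because `β ≤ 1/m`, the uniform
weight `1/m` on `N` is valid with any witness set, so one of the segments from `α₁` or `α₂` to it
stays valid and contains a weight whose derivative vanishes at `z`; by convexity `z` then
minimizes that objective. For closedness, the valid weights with a fixed witness set form a
compact set, and the minimizers are the projection of a closed subset of weights × `X`.
-/

open Set Finset

theorem IsMinOn.sub_mul_deriv_nonneg {f : ℝ → ℝ} {X : Set ℝ} {a b : ℝ} (hX : Convex ℝ X)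
    (hmin : IsMinOn f X a) (hf : DifferentiableAt ℝ f a) (ha : a ∈ X) (hb : b ∈ X) :
    0 ≤ (b - a) * deriv f a := by
  simpa using hmin.localize.hasFDerivWithinAt_nonneg hf.hasDerivAt.hasFDerivAt.hasFDerivWithinAt
    (sub_mem_posTangentConeAt_of_segment_subset (hX.segment_subset ha hb))

theorem ConvexOn.isMinOn_of_deriv_eq_zero {f : ℝ → ℝ} {x : ℝ} (hf : ConvexOn ℝ univ f)
    (hd : DifferentiableAt ℝ f x) (h0 : deriv f x = 0) : IsMinOn f univ x := by
  refine hf.isMinOn_of_rightDeriv_eq_zero (by simp) ?_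
  rwa [hd.hasDerivAt.hasDerivWithinAt.derivWithin (uniqueDiffWithinAt_Ioi x)]

theorem deriv_nonneg_of_isMinOn_of_lt {f : ℝ → ℝ} {X : Set ℝ} {a b z : ℝ}
    (hf : ConvexOn ℝ univ f) (hd : Differentiable ℝ f) (hX : Convex ℝ X) (hmin : IsMinOn f X a)
    (ha : a ∈ X) (hb : b ∈ X) (hab : a < b) (haz : a ≤ z) : 0 ≤ deriv f z :=
  (nonneg_of_mul_nonneg_right (hmin.sub_mul_deriv_nonneg hX (hd a) ha hb) (sub_pos.2 hab)).trans
    (hf.monotoneOn_deriv (fun x _ => hd x) trivial trivial haz)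

theorem deriv_nonpos_of_isMinOn_of_lt {f : ℝ → ℝ} {X : Set ℝ} {a b z : ℝ}
    (hf : ConvexOn ℝ univ f) (hd : Differentiable ℝ f) (hX : Convex ℝ X) (hmin : IsMinOn f X b)
    (ha : a ∈ X) (hb : b ∈ X) (hab : a < b) (hzb : z ≤ b) : deriv f z ≤ 0 :=
  (hf.monotoneOn_deriv (fun x _ => hd x) trivial trivial hzb).trans
    (nonpos_of_mul_nonneg_right (hmin.sub_mul_deriv_nonneg hX (hd b) hb ha) (sub_neg.2 hab))

theorem Convex.exists_mem_eq_of_mem_uIcc {E : Type*} [AddCommGroup E] [Module ℝ E] {W : Set E}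
    (hW : Convex ℝ W) {φ : E → ℝ} (hφ : IsLinearMap ℝ φ) {a b t : ℝ} (ha : a ∈ φ '' W)
    (hb : b ∈ φ '' W) (ht : t ∈ uIcc a b) : ∃ c ∈ W, φ c = t :=
  (hW.is_linear_image hφ).ordConnected.uIcc_subset ha hb ht

theorem IsClosed.image_snd_of_subset_prod {A B : Type*} [TopologicalSpace A] [TopologicalSpace B]
    {K : Set A} {C : Set (A × B)} (hK : IsCompact K) (hC : IsClosed C) (hCK : C ⊆ K ×ˢ univ) :
    IsClosed (Prod.snd '' C) := by
  have := isCompact_iff_compactSpace.mp hK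
  have himage : Prod.snd '' C = Prod.snd '' (Prod.map ((↑) : K → A) id ⁻¹' C) := by
    ext y
    constructor
    · rintro ⟨⟨a, y⟩, hp, rfl⟩
      exact ⟨(⟨a, (hCK hp).1⟩, y), hp, rfl⟩
    · rintro ⟨⟨a, y⟩, hp, rfl⟩
      exact ⟨(a, y), hp, rfl⟩
  rw [himage]
  exact isClosedMap_snd_of_compactSpace _ (hC.preimage (by fun_prop))

theorem convexOn_weightedSum {ι E : Type*} [AddCommGroup E] [Module ℝ E] {s : Set E}
    (hs : Convex ℝ s) {V : Finset ι} {h : ι → E → ℝ} {α : ι → ℝ} (hα : ∀ i ∈ V, 0 ≤ α i)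
    (hh : ∀ i ∈ V, ConvexOn ℝ s (h i)) : ConvexOn ℝ s fun x => ∑ i ∈ V, α i * h i x := by
  have := Finset.sum_induction (fun i x => α i * h i x) (ConvexOn ℝ s) (fun _ _ => ConvexOn.add)
    (convexOn_const 0 hs) fun i hi => (hh i hi).smul (hα i hi)
  simpa [Finset.sum_fn] using this

theorem hasDerivAt_weightedSum {ι : Type*} {V : Finset ι} {h : ι → ℝ → ℝ} (α : ι → ℝ) {x : ℝ}
    (hh : ∀ i ∈ V, DifferentiableAt ℝ (h i) x) :
    HasDerivAt (fun y => ∑ i ∈ V, α i * h i y) (∑ i ∈ V, α i * deriv (h i) x) x :=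
  HasDerivAt.fun_sum fun i hi => (hh i hi).hasDerivAt.const_mul (α i)

theorem isLinearMap_weightedSum {ι : Type*} (V : Finset ι) (c : ι → ℝ) :
    IsLinearMap ℝ fun α : ι → ℝ => ∑ i ∈ V, α i * c i where
  map_add α β := by simp [add_mul, Finset.sum_add_distrib]
  map_smul r α := by simp [Finset.mul_sum, mul_assoc]

def weightedArgmin {ι E : Type*} (V : Finset ι) (h : ι → E → ℝ) (X : Set E)
    (W : Set (ι → ℝ)) : Set E :=
  {x | x ∈ X ∧ ∃ α ∈ W, IsMinOn (fun y => ∑ i ∈ V, α i * h i y) X x}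

theorem isClosed_weightedArgmin {ι E : Type*} [TopologicalSpace E] {V : Finset ι}
    {h : ι → E → ℝ} {X : Set E} {W : Set (ι → ℝ)} (hh : ∀ i ∈ V, Continuous (h i))
    (hX : IsClosed X) (hW : IsCompact W) : IsClosed (weightedArgmin V h X W) := by
  set C : Set ((ι → ℝ) × E) := (W ×ˢ X) ∩
    ⋂ y ∈ X, {p | ∑ i ∈ V, p.1 i * h i p.2 ≤ ∑ i ∈ V, p.1 i * h i y}
  have hC : IsClosed C := (hW.isClosed.prod hX).inter <| isClosed_biInter fun y _ =>
    isClosed_le (continuous_finsetSum _ fun i hi => by fun_prop)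
      (continuous_finsetSum _ fun i _ => by fun_prop)
  have hCW : C ⊆ W ×ˢ univ := fun p hp => ⟨hp.1.1, trivial⟩
  convert hC.image_snd_of_subset_prod hW hCW using 1
  ext x
  simp only [C, weightedArgmin, isMinOn_iff, mem_image, mem_inter_iff, mem_prod, mem_iInter₂,
    mem_ofPred_eq, Prod.exists, exists_eq_right]
  exact ⟨fun ⟨hx, α, hα, hmin⟩ => ⟨α, ⟨hα, hx⟩, hmin⟩,
    fun ⟨α, ⟨hα, hx⟩, hmin⟩ => ⟨hx, α, hα, hmin⟩⟩

section OrdConnected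

variable {ι : Type*} {V : Finset ι} {h : ι → ℝ → ℝ} {X : Set ℝ}

theorem mem_weightedArgmin_of_mem_uIcc (hconv : ∀ i ∈ V, ConvexOn ℝ univ (h i))
    (hdiff : ∀ i ∈ V, Differentiable ℝ (h i)) {W : Set (ι → ℝ)} (hW : Convex ℝ W)
    (hnn : ∀ α ∈ W, ∀ i ∈ V, 0 ≤ α i) {α α' : ι → ℝ} (hα : α ∈ W) (hα' : α' ∈ W) {z : ℝ}
    (hz : z ∈ X) (h0 : 0 ∈ uIcc (∑ i ∈ V, α i * deriv (h i) z) (∑ i ∈ V, α' i * deriv (h i) z)) :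
    z ∈ weightedArgmin V h X W := by
  obtain ⟨ω, hω, hω0⟩ := hW.exists_mem_eq_of_mem_uIcc (isLinearMap_weightedSum V _)
    ⟨α, hα, rfl⟩ ⟨α', hα', rfl⟩ h0
  have hd := hasDerivAt_weightedSum ω fun i hi => hdiff i hi z
  refine ⟨hz, ω, hω, ?_⟩
  exact ((convexOn_weightedSum convex_univ (hnn ω hω) hconv).isMinOn_of_deriv_eq_zero
    hd.differentiableAt (hd.deriv.trans hω0)).on_subset (subset_univ X)

theorem mem_weightedArgmin_union_of_mem_Icc (hconv : ∀ i ∈ V, ConvexOn ℝ univ (h i))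
    (hdiff : ∀ i ∈ V, Differentiable ℝ (h i)) (hX : Convex ℝ X) {W₁ W₂ : Set (ι → ℝ)}
    (hW₁ : Convex ℝ W₁) (hW₂ : Convex ℝ W₂) (hnn₁ : ∀ α ∈ W₁, ∀ i ∈ V, 0 ≤ α i)
    (hnn₂ : ∀ α ∈ W₂, ∀ i ∈ V, 0 ≤ α i) {α₀ : ι → ℝ} (hα₀₁ : α₀ ∈ W₁) (hα₀₂ : α₀ ∈ W₂)
    {a b z : ℝ} (ha : a ∈ weightedArgmin V h X W₁) (hb : b ∈ weightedArgmin V h X W₂)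
    (hz : z ∈ Icc a b) : z ∈ weightedArgmin V h X W₁ ∪ weightedArgmin V h X W₂ := by
  obtain rfl | hab := (hz.1.trans hz.2).eq_or_lt
  · rw [Set.Icc_self, mem_singleton_iff] at hz
    exact Or.inl (hz ▸ ha)
  obtain ⟨haX, α₁, hα₁, hmin₁⟩ := ha
  obtain ⟨hbX, α₂, hα₂, hmin₂⟩ := hb
  have hzX : z ∈ X := hX.ordConnected.out haX hbX hz
  set G : (ι → ℝ) → ℝ := fun α => ∑ i ∈ V, α i * deriv (h i) z
  have hG : ∀ α, deriv (fun y => ∑ i ∈ V, α i * h i y) z = G α := fun α =>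
    (hasDerivAt_weightedSum α fun i hi => hdiff i hi z).deriv
  have hdiffSum : ∀ α : ι → ℝ, Differentiable ℝ fun y => ∑ i ∈ V, α i * h i y :=
    fun α y => (hasDerivAt_weightedSum α fun i hi => hdiff i hi y).differentiableAt
  have hG₁ : 0 ≤ G α₁ := hG α₁ ▸ deriv_nonneg_of_isMinOn_of_lt
    (convexOn_weightedSum convex_univ (hnn₁ α₁ hα₁) hconv) (hdiffSum α₁) hX hmin₁ haX hbX hab hz.1
  have hG₂ : G α₂ ≤ 0 := hG α₂ ▸ deriv_nonpos_of_isMinOn_of_lt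
    (convexOn_weightedSum convex_univ (hnn₂ α₂ hα₂) hconv) (hdiffSum α₂) hX hmin₂ haX hbX hab hz.2
  rcases le_total 0 (G α₀) with h0 | h0
  · exact Or.inr <| mem_weightedArgmin_of_mem_uIcc hconv hdiff hW₂ hnn₂ hα₂ hα₀₂ hzX
      (Icc_subset_uIcc ⟨hG₂, h0⟩)
  · exact Or.inl <| mem_weightedArgmin_of_mem_uIcc hconv hdiff hW₁ hnn₁ hα₁ hα₀₁ hzX
      (Icc_subset_uIcc' ⟨h0, hG₁⟩)

theorem ordConnected_biUnion_weightedArgmin (hconv : ∀ i ∈ V, ConvexOn ℝ univ (h i))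
    (hdiff : ∀ i ∈ V, Differentiable ℝ (h i)) (hX : Convex ℝ X) {κ : Type*} {K : Set κ}
    {W : κ → Set (ι → ℝ)} (hW : ∀ k ∈ K, Convex ℝ (W k))
    (hnn : ∀ k ∈ K, ∀ α ∈ W k, ∀ i ∈ V, 0 ≤ α i) {α₀ : ι → ℝ} (hα₀ : ∀ k ∈ K, α₀ ∈ W k) :
    (⋃ k ∈ K, weightedArgmin V h X (W k)).OrdConnected := by
  refine ⟨fun a ha b hb z hz => ?_⟩
  simp only [mem_iUnion₂] at ha hb ⊢
  obtain ⟨k₁, hk₁, ha⟩ := ha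
  obtain ⟨k₂, hk₂, hb⟩ := hb
  rcases mem_weightedArgmin_union_of_mem_Icc hconv hdiff hX (hW k₁ hk₁) (hW k₂ hk₂)
    (hnn k₁ hk₁) (hnn k₂ hk₂) (hα₀ k₁ hk₁) (hα₀ k₂ hk₂) ha hb hz with hz | hz
  exacts [⟨k₁, hk₁, hz⟩, ⟨k₂, hk₂, hz⟩]

end OrdConnected

section ValidWeights

variable {ι : Type*} {V N S : Finset ι} {β : ℝ}

/-- Weights are required to vanish off `V` so that this set is compact; the objective
`∑ i ∈ V, α i * h i x` only sees `α` on `V`. -/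
def validWeights (V S : Finset ι) (β : ℝ) : Set (ι → ℝ) :=
  {α | (∀ i ∉ V, α i = 0) ∧ (∀ i ∈ V, 0 ≤ α i) ∧ ∑ i ∈ V, α i = 1 ∧ ∀ i ∈ S, β ≤ α i}

theorem convex_validWeights : Convex ℝ (validWeights V S β) := by
  rintro α ⟨hα₀, hα, hα₁, hαS⟩ α' ⟨hα'₀, hα', hα'₁, hα'S⟩ a b ha hb hab
  refine ⟨fun i hi => ?_, fun i hi => ?_, ?_, fun i hi => ?_⟩
  · simp [hα₀ i hi, hα'₀ i hi]
  · have := hα i hi; have := hα' i hi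
    simp only [Pi.add_apply, Pi.smul_apply, smul_eq_mul]
    positivity
  · simp [Finset.sum_add_distrib, ← Finset.mul_sum, hα₁, hα'₁, hab]
  · calc β = a * β + b * β := by rw [← add_mul, hab, one_mul]
      _ ≤ (a • α + b • α') i := by
        simp only [Pi.add_apply, Pi.smul_apply, smul_eq_mul]
        gcongr
        exacts [hαS i hi, hα'S i hi]

theorem isCompact_validWeights : IsCompact (validWeights V S β) := by
  have hclosed : IsClosed (validWeights V S β) := by
    simp only [validWeights, ofPred_and, ofPred_forall]
    refine (isClosed_biInter fun i _ => isClosed_eq (continuous_apply i) continuous_const).inter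
      ((isClosed_biInter fun i _ => isClosed_le continuous_const (continuous_apply i)).inter
      ((isClosed_eq (continuous_finsetSum _ fun i _ => continuous_apply i) continuous_const).inter
      (isClosed_biInter fun i _ => isClosed_le continuous_const (continuous_apply i))))
  refine (isCompact_univ_pi fun _ => isCompact_Icc (a := (0 : ℝ)) (b := 1)).of_isClosed_subset
    hclosed fun α ⟨hα₀, hα, hα₁, _⟩ i _ => ?_
  by_cases hi : i ∈ V
  · exact ⟨hα i hi, hα₁ ▸ Finset.single_le_sum hα hi⟩
  · simp [hα₀ i hi]

theorem indicator_mem_validWeights (hNV : N ⊆ V) (hN : N.Nonempty) (hβ : β ≤ (#N : ℝ)⁻¹)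
    (hSN : S ⊆ N) : (N : Set ι).indicator (fun _ => (#N : ℝ)⁻¹) ∈ validWeights V S β := by
  refine ⟨fun i hi => ?_, fun i _ => ?_, ?_, fun i hi => ?_⟩
  · exact indicator_of_notMem (fun hN => hi (hNV hN)) _
  · exact indicator_nonneg (fun _ _ => by positivity) i
  · rw [Finset.sum_indicator_subset _ hNV, Finset.sum_const, nsmul_eq_mul,
      mul_inv_cancel₀ (by exact_mod_cast hN.card_pos.ne')]
  · rwa [indicator_of_mem (hSN hi)]

end ValidWeights

theorem YTildeSet_eq_biUnion {ι : Type*} {V N : Finset ι} {h : ι → ℝ → ℝ} {X : Set ℝ} {β : ℝ}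
    {γ : ℕ} (hNV : N ⊆ V) :
    YTildeSet V N h X β γ =
      ⋃ S ∈ {S : Finset ι | S ⊆ N ∧ γ ≤ #S}, weightedArgmin V h X (validWeights V S β) := by
  have hsum : ∀ (α c : ι → ℝ), ∑ i ∈ V, (V : Set ι).indicator α i * c i = ∑ i ∈ V, α i * c i :=
    fun α c => Finset.sum_congr rfl fun i hi => by rw [indicator_of_mem (mem_coe.2 hi)]
  ext x
  simp only [YTildeSet, ValidWeightVN, weightedArgmin, validWeights, mem_iUnion₂, isMinOn_iff,
    mem_ofPred_eq]
  constructor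
  · rintro ⟨hx, α, ⟨hα, hα₁, S, hSN, hS, hαS⟩, hmin⟩
    refine ⟨S, ⟨hSN, hS⟩, hx, (V : Set ι).indicator α, ⟨fun i hi => ?_, fun i hi => ?_, ?_,
      fun i hi => ?_⟩, fun y hy => ?_⟩
    · exact indicator_of_notMem (mt mem_coe.1 hi) α
    · simpa [hi] using hα i hi
    · exact (Finset.sum_congr rfl fun i hi => indicator_of_mem (mem_coe.2 hi) α).trans hα₁
    · simpa [hNV (hSN hi)] using hαS i hi
    · simpa [hsum] using hmin y hy
  · rintro ⟨S, ⟨hSN, hS⟩, hx, α, ⟨-, hα, hα₁, hαS⟩, hmin⟩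
    exact ⟨hx, α, ⟨hα, hα₁, S, hSN, hS, hαS⟩, hmin⟩

theorem YTildeSet_convex_isClosed_general {ι : Type*} (L : ℝ)
    (V N : Finset ι) (hNV : N ⊆ V) (hNne : N.Nonempty) (m : ℕ) (hm : N.card = m)
    (h : ι → ℝ → ℝ) (hadm : ∀ i ∈ V, Admissible L (h i))
    (X : Set ℝ) (hXcl : IsClosed X) (hXconv : Convex ℝ X)
    (β : ℝ) (hβ : β ≤ 1 / (m : ℝ)) (γ : ℕ) :
    Convex ℝ (YTildeSet V N h X β γ) ∧ IsClosed (YTildeSet V N h X β γ) := by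
  subst hm
  rw [one_div] at hβ
  have hconv : ∀ i ∈ V, ConvexOn ℝ univ (h i) := fun i hi => (hadm i hi).1
  have hsmooth : ∀ i ∈ V, ContDiff ℝ 1 (h i) := fun i hi => (hadm i hi).2.1
  rw [YTildeSet_eq_biUnion hNV]
  refine ⟨(ordConnected_biUnion_weightedArgmin hconv
    (fun i hi => (hsmooth i hi).differentiable one_ne_zero) hXconv
    (fun _ _ => convex_validWeights) (fun _ _ _ hα => hα.2.1)
    fun S hS => indicator_mem_validWeights hNV hNne hβ hS.1).convex, ?_⟩
  exact (N.powerset.finite_toSet.subset fun S hS => mem_powerset.2 hS.1)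
    |>.isClosed_biUnion fun S _ =>
      isClosed_weightedArgmin (fun i hi => (hsmooth i hi).continuous) hXcl isCompact_validWeights

/-- Lemma (constant c): if `β ≤ 1/|N|` and `γ ≤ |N|`, the set `Ỹ(β,γ)` is
convex and closed. -/
theorem YTildeSet_convex_isClosed {ι : Type*} (L : ℝ) (hL : 0 < L)
    (V N : Finset ι) (hNV : N ⊆ V) (hNne : N.Nonempty) (m : ℕ) (hm : N.card = m)
    (h : ι → ℝ → ℝ) (hadm : ∀ i ∈ V, Admissible L (h i))
    (X : Set ℝ) (hXne : X.Nonempty) (hXcl : IsClosed X) (hXconv : Convex ℝ X)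
    (β : ℝ) (hβ : β ≤ 1 / (m : ℝ)) (γ : ℕ) (hγ : γ ≤ m) :
    Convex ℝ (YTildeSet V N h X β γ) ∧ IsClosed (YTildeSet V N h X β γ) :=
  YTildeSet_convex_isClosed_general L V N hNV hNne m hm h hadm X hXcl hXconv β hβ γ
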